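/- arXiv:2510.02553 — 3 statements merged into one kernel-verified Lean document; each statement's English description precedes it below -/
import Mathlib

section
/- Let $A \in \mathbb{R}^{3\times 3}$ be symmetric positive semidefinite and $B : [s_-, s_+] \to \mathbb{R}^{3\times 3}$ continuous and symmetric-valued. Suppose $H : [s_-, s_+] \to \mathbb{C}^{3\times 3}$ is a $C^1$ symmetric-matrix-valued solution of the Riccati equation $\dot{H} + HAH + B = 0$ with $\operatorname{Im}(H(s_-))$ positive definite. Then $\operatorname{Im}(H(s))$ is positive definite for all $s \in [s_-, s_+]$. -/
open Set Matrix Filter Topology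

/-!
Write `H = X + iY` with `X, Y` real. Since `A` and `B` are real, the imaginary part of the Riccati
equation reads `Ẏ = -(XAY + YAX)`, so by Jacobi's formula `det Y` solves the scalar linear equation
`(det Y)' = -2 tr(AX) det Y` and never vanishes. A continuous path of symmetric matrices that starts
positive definite and never becomes singular stays positive definite: positive semidefiniteness is
closed, positive definiteness is open, and the two agree where the determinant is nonzero.
-/

namespace Matrix

theorem map_re_mul {l m n : Type*} [Fintype m] (M : Matrix l m ℂ) (N : Matrix m n ℂ) :
    (M * N).map Complex.re =
      M.map Complex.re * N.map Complex.re - M.map Complex.im * N.map Complex.im := by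
  ext i j
  simp [mul_apply, Complex.re_sum, Finset.sum_sub_distrib]

theorem map_im_mul {l m n : Type*} [Fintype m] (M : Matrix l m ℂ) (N : Matrix m n ℂ) :
    (M * N).map Complex.im =
      M.map Complex.re * N.map Complex.im + M.map Complex.im * N.map Complex.re := by
  ext i j
  simp [mul_apply, Complex.im_sum, Finset.sum_add_distrib]

theorem map_im_eq_of_riccati {n : Type*} [Fintype n] {H H' : Matrix n n ℂ} {A B : Matrix n n ℝ}
    (h : H' + H * A.map Complex.ofReal * H + B.map Complex.ofReal = 0) :
    H'.map Complex.im =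
      -(H.map Complex.re * A * H.map Complex.im + H.map Complex.im * A * H.map Complex.re) := by
  have hre : (A.map Complex.ofReal).map Complex.re = A := by ext; simp
  have him : (A.map Complex.ofReal).map Complex.im = 0 := by ext; simp
  have hHAH : (H * A.map Complex.ofReal * H).map Complex.im =
      H.map Complex.re * A * H.map Complex.im + H.map Complex.im * A * H.map Complex.re := by
    simp [map_im_mul, map_re_mul, hre, him]
  rw [add_assoc, add_eq_zero_iff_eq_neg] at h
  ext i j
  simp [h, ← hHAH]

theorem trace_adjugate_mul_add {n R : Type*} [Fintype n] [DecidableEq n] [CommRing R]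
    (Q X Y : Matrix n n R) :
    (Y.adjugate * (X * Q * Y + Y * Q * X)).trace = 2 * (Q * X).trace * Y.det := by
  have h₁ : (Y.adjugate * (X * Q * Y)).trace = Y.det * (Q * X).trace := by
    rw [← Matrix.mul_assoc, ← Matrix.mul_assoc, trace_mul_cycle, ← Matrix.mul_assoc,
      mul_adjugate, smul_mul, one_mul, smul_mul, trace_smul, trace_mul_comm, smul_eq_mul]
  have h₂ : (Y.adjugate * (Y * Q * X)).trace = Y.det * (Q * X).trace := by
    rw [Matrix.mul_assoc, ← Matrix.mul_assoc, adjugate_mul, smul_mul, one_mul, trace_smul,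
      smul_eq_mul]
  rw [Matrix.mul_add, trace_add, h₁, h₂]
  ring

variable {n : Type*} [Fintype n]

theorem isClosed_setOf_posSemidef : IsClosed {M : Matrix n n ℝ | M.PosSemidef} := by
  simp only [posSemidef_iff_dotProduct_mulVec, ofPred_and, ofPred_forall]
  refine .inter (isClosed_eq (by fun_prop) continuous_id) (isClosed_iInter fun x => ?_)
  exact isClosed_le continuous_const
    (continuous_const.dotProduct (continuous_id.matrix_mulVec continuous_const))

theorem posDef_of_forall_mem_sphere {M : Matrix n n ℝ} (hM : M.IsHermitian)
    (hpos : ∀ v ∈ Metric.sphere (0 : n → ℝ) 1, 0 < v ⬝ᵥ M *ᵥ v) : M.PosDef := by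
  refine posDef_iff_dotProduct_mulVec.2 ⟨hM, fun x hx => ?_⟩
  have hx' : 0 < ‖x‖ := norm_pos_iff.2 hx
  have hxu : x = ‖x‖ • (‖x‖⁻¹ • x) := by rw [smul_smul, mul_inv_cancel₀ hx'.ne', one_smul]
  have hu := hpos (‖x‖⁻¹ • x) (by simpa using norm_smul_inv_norm (𝕜 := ℝ) hx)
  rw [star_trivial, hxu, mulVec_smul, dotProduct_smul, smul_dotProduct]
  simp only [smul_eq_mul]
  positivity

theorem PosDef.eventually_posDef {α : Type*} {l : Filter α} {f : α → Matrix n n ℝ}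
    {M : Matrix n n ℝ} (hM : M.PosDef) (hf : Tendsto f l (𝓝 M))
    (hherm : ∀ᶠ a in l, (f a).IsHermitian) : ∀ᶠ a in l, (f a).PosDef := by
  have hquad : Continuous fun p : Matrix n n ℝ × (n → ℝ) => p.2 ⬝ᵥ p.1 *ᵥ p.2 := by fun_prop
  have hnear : ∀ᶠ N in 𝓝 M, ∀ v ∈ Metric.sphere (0 : n → ℝ) 1, 0 < v ⬝ᵥ N *ᵥ v := by
    refine (isCompact_sphere _ _).eventually_forall_of_forall_eventually fun v hv => ?_
    have hMv : 0 < v ⬝ᵥ M *ᵥ v := by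
      simpa using hM.dotProduct_mulVec_pos (ne_zero_of_mem_unit_sphere ⟨v, hv⟩)
    exact hquad.continuousAt.eventually_const_lt hMv
  filter_upwards [hf.eventually hnear, hherm] with a hpos hh
  exact posDef_of_forall_mem_sphere hh hpos

end Matrix

theorem posDef_of_continuousOn_of_det_ne_zero {n : Type*} [Fintype n] [DecidableEq n]
    {a b : ℝ} {Y : ℝ → Matrix n n ℝ} (hY : ContinuousOn Y (Icc a b))
    (hherm : ∀ t ∈ Icc a b, (Y t).IsHermitian) (hdet : ∀ t ∈ Icc a b, (Y t).det ≠ 0)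
    (ha : (Y a).PosDef) : ∀ t ∈ Icc a b, (Y t).PosDef := by
  have hclosed : {t | (Y t).PosDef} ∩ Icc a b = Icc a b ∩ Y ⁻¹' {M | M.PosSemidef} := by
    ext t
    exact ⟨fun ⟨h, ht⟩ => ⟨ht, h.posSemidef⟩,
      fun ⟨ht, h⟩ => ⟨(h.posDef_iff_det_ne_zero).2 (hdet t ht), ht⟩⟩
  refine fun t =>
    (IsClosed.Icc_subset_of_forall_mem_nhdsWithin (s := {t | (Y t).PosDef}) ?_ ha ?_ ·)
  · rw [hclosed]
    exact hY.preimage_isClosed_of_isClosed isClosed_Icc isClosed_setOf_posSemidef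
  · rintro x ⟨hx, hxI⟩
    have hI : Icc a b ∈ 𝓝[>] x := Icc_mem_nhdsGT_of_mem hxI
    exact hx.eventually_posDef ((hY x (Ico_subset_Icc_self hxI)).mono_of_mem_nhdsWithin hI)
      (mem_of_superset hI hherm)

theorem hasDerivWithinAt_det_fin_three {Y : ℝ → Matrix (Fin 3) (Fin 3) ℝ}
    {Y' : Matrix (Fin 3) (Fin 3) ℝ} {D : Set ℝ} {s : ℝ}
    (h : ∀ i j, HasDerivWithinAt (fun t => Y t i j) (Y' i j) D s) :
    HasDerivWithinAt (fun t => (Y t).det) ((Y s).adjugate * Y').trace D s := by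
  simp only [det_fin_three]
  refine ((((h 0 0).fun_mul (h 1 1)).fun_mul (h 2 2)).fun_sub
    (((h 0 0).fun_mul (h 1 2)).fun_mul (h 2 1))).fun_sub
    (((h 0 1).fun_mul (h 1 0)).fun_mul (h 2 2)) |>.fun_add
    (((h 0 1).fun_mul (h 1 2)).fun_mul (h 2 0)) |>.fun_add
    (((h 0 2).fun_mul (h 1 0)).fun_mul (h 2 1)) |>.fun_sub
    (((h 0 2).fun_mul (h 1 1)).fun_mul (h 2 0)) |>.congr_deriv ?_
  simp [trace, adjugate_fin_three, Fin.sum_univ_three, vecMul, dotProduct]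
  ring

theorem ne_zero_of_hasDerivWithinAt_mul_self {a b : ℝ} {φ y : ℝ → ℝ}
    (hφ : ContinuousOn φ (Icc a b))
    (hy : ∀ t ∈ Icc a b, HasDerivWithinAt y (φ t * y t) (Icc a b) t) (ha : y a ≠ 0) :
    ∀ t ∈ Icc a b, y t ≠ 0 := by
  intro t ht hyt
  obtain ⟨C, hC⟩ := isCompact_Icc.exists_bound_of_continuousOn hφ
  have hsub : Icc a t ⊆ Icc a b := Icc_subset_Icc_right ht.2
  have hsub' : Ioc a t ⊆ Icc a b := Ioc_subset_Icc_self.trans hsub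
  have hlip : ∀ u ∈ Ioc a t, LipschitzOnWith C.toNNReal (φ u * ·) univ := fun u hu =>
    ((lipschitzWith_smul (φ u)).weaken (by
      rw [← norm_toNNReal]; exact Real.toNNReal_le_toNNReal (hC u (hsub' hu)))).lipschitzOnWith
  have hzero : EqOn y (fun _ => 0) (Icc a t) :=
    ODE_solution_unique_of_mem_Icc_left (v := (φ · * ·)) (s := fun _ => univ) hlip
    (fun u hu => (hy u (hsub hu)).continuousWithinAt.mono hsub)
    (fun u hu => (hy u (hsub' hu)).mono_of_mem_nhdsWithin
      (Icc_mem_nhdsLE_of_mem ⟨hu.1, hu.2.trans ht.2⟩))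
    (fun _ _ => mem_univ _) continuousOn_const
    (fun u _ => by simpa using hasDerivWithinAt_const u (Iic u) (0 : ℝ))
    (fun _ _ => mem_univ _) hyt
  exact ha (hzero ⟨le_rfl, ht.1⟩)

theorem det_ne_zero_of_hasDerivWithinAt_im_riccati {a b : ℝ} {A : Matrix (Fin 3) (Fin 3) ℝ}
    {X Y : ℝ → Matrix (Fin 3) (Fin 3) ℝ} (hX : ContinuousOn X (Icc a b))
    (hY : ∀ t ∈ Icc a b, ∀ i j, HasDerivWithinAt (fun t => Y t i j)
      ((-(X t * A * Y t + Y t * A * X t)) i j) (Icc a b) t)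
    (ha : (Y a).det ≠ 0) : ∀ t ∈ Icc a b, (Y t).det ≠ 0 := by
  refine ne_zero_of_hasDerivWithinAt_mul_self (φ := fun t => -(2 * (A * X t).trace)) ?_
    (fun t ht => ?_) ha
  · have htrace : Continuous fun M : Matrix (Fin 3) (Fin 3) ℝ => (A * M).trace :=
      (continuous_const.matrix_mul continuous_id).matrix_trace
    exact ((htrace.comp_continuousOn hX).const_mul 2).neg
  · have hdet := hasDerivWithinAt_det_fin_three (hY t ht)
    rw [Matrix.mul_neg, trace_neg, trace_adjugate_mul_add] at hdet
    convert hdet using 1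
    ring

theorem riccati_preserves_posdef_im_general
    (sm sp : ℝ)
    (A : Matrix (Fin 3) (Fin 3) ℝ)
    (B : ℝ → Matrix (Fin 3) (Fin 3) ℝ)
    (H H' : ℝ → Matrix (Fin 3) (Fin 3) ℂ)
    (hHderiv : ∀ s ∈ Icc sm sp, ∀ i j,
      HasDerivWithinAt (fun t => H t i j) (H' s i j) (Icc sm sp) s)
    (hric : ∀ s ∈ Icc sm sp,
      H' s + H s * A.map (Complex.ofReal) * H s + (B s).map (Complex.ofReal) = 0)
    (hHsym : ∀ s ∈ Icc sm sp, (H s)ᵀ = H s)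
    (hinit : ((H sm).map Complex.im).PosDef) :
    ∀ s ∈ Icc sm sp, ((H s).map Complex.im).PosDef := by
  have hcont (f : ℂ → ℝ) (hf : Continuous f) : ContinuousOn (fun s => (H s).map f) (Icc sm sp) :=
    continuousOn_pi.2 fun i => continuousOn_pi.2 fun j =>
      hf.comp_continuousOn fun s hs => (hHderiv s hs i j).continuousWithinAt
  have hYderiv : ∀ s ∈ Icc sm sp, ∀ i j, HasDerivWithinAt (fun t => (H t).map Complex.im i j)
      ((-((H s).map Complex.re * A * (H s).map Complex.im +
        (H s).map Complex.im * A * (H s).map Complex.re)) i j) (Icc sm sp) s := fun s hs i j => by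
    rw [← map_im_eq_of_riccati (hric s hs)]
    exact Complex.imCLM.hasFDerivAt.comp_hasDerivWithinAt s (hHderiv s hs i j)
  have hdet := det_ne_zero_of_hasDerivWithinAt_im_riccati (hcont _ Complex.continuous_re) hYderiv
    hinit.det_pos.ne'
  refine posDef_of_continuousOn_of_det_ne_zero (hcont _ Complex.continuous_im) (fun s hs => ?_)
    hdet hinit
  rw [IsHermitian, conjTranspose_eq_transpose_of_trivial, ← transpose_map, hHsym s hs]

/-- Preservation of positive-definiteness of the imaginary part along the
matrix Riccati flow `Ḣ + HAH + B = 0`. -/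
theorem riccati_preserves_posdef_im
    (sm sp : ℝ) (hs : sm ≤ sp)
    (A : Matrix (Fin 3) (Fin 3) ℝ) (hA : A.PosSemidef)
    (B : ℝ → Matrix (Fin 3) (Fin 3) ℝ)
    (hBcont : ∀ i j, ContinuousOn (fun s => B s i j) (Icc sm sp))
    (hBsym : ∀ s ∈ Icc sm sp, (B s)ᵀ = B s)
    (H H' : ℝ → Matrix (Fin 3) (Fin 3) ℂ)
    (hHderiv : ∀ s ∈ Icc sm sp, ∀ i j,
      HasDerivWithinAt (fun t => H t i j) (H' s i j) (Icc sm sp) s)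
    (hH'cont : ∀ i j, ContinuousOn (fun s => H' s i j) (Icc sm sp))
    (hric : ∀ s ∈ Icc sm sp,
      H' s + H s * A.map (Complex.ofReal) * H s + (B s).map (Complex.ofReal) = 0)
    (hHsym : ∀ s ∈ Icc sm sp, (H s)ᵀ = H s)
    (hinit : ((H sm).map Complex.im).PosDef) :
    ∀ s ∈ Icc sm sp, ((H s).map Complex.im).PosDef :=
  riccati_preserves_posdef_im_general sm sp A B H H' hHderiv hric hHsym hinit
end

section
/- Let $H(s) = Z(s)Y(s)^{-1}$ where $Y, Z : [s_-, s_+] \to \mathbb{C}^{n\times n}$ solve $\dot{Y} = AZ$, $\dot{Z} = -BY$ with $A$ real symmetric, $B(s)$ real symmetric, $Y(s_-) = I$, $Z(s_-) = iI$, and assume $Y(s)$ is invertible and $H(s)$ symmetric with $\operatorname{Im}(H(s))$ positive definite for all $s$. Then the quantity $\det(\operatorname{Im}(H(s))) \cdot |\det Y(s)|^2$ is constant in $s$. -/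
/-!
Along the Jacobi system the Hermitian Wronskian `W = Yᴴ Z - Zᴴ Y` is conserved, because `A` and
`B` are Hermitian; hence `W ≡ W(s₋) = 2i`. Writing `Z = H Y` with `H` symmetric gives
`W = Yᴴ (H - Hᴴ) Y = 2i · Yᴴ (Im H) Y`, so `Yᴴ (Im H) Y = 1`, and taking determinants
`det (Im H) · |det Y|² = 1` for every `s`.
-/

open Set Matrix

section EntrywiseDeriv

variable {m n p 𝔸 : Type*} [NormedRing 𝔸] [NormedAlgebra ℝ 𝔸]

-- Matrices carry no global norm, so derivatives of matrix-valued curves are taken entrywise.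
def HasEntrywiseDerivWithinAt (M : ℝ → Matrix m n 𝔸) (M' : Matrix m n 𝔸) (s : Set ℝ) (x : ℝ) :
    Prop :=
  ∀ i j, HasDerivWithinAt (fun t => M t i j) (M' i j) s x

namespace HasEntrywiseDerivWithinAt

variable {s : Set ℝ} {x : ℝ}

theorem mul [Fintype n] {M : ℝ → Matrix m n 𝔸} {N : ℝ → Matrix n p 𝔸} {M' : Matrix m n 𝔸}
    {N' : Matrix n p 𝔸} (hM : HasEntrywiseDerivWithinAt M M' s x)
    (hN : HasEntrywiseDerivWithinAt N N' s x) :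
    HasEntrywiseDerivWithinAt (fun t => M t * N t) (M' * N x + M x * N') s x := fun i j => by
  simpa only [mul_apply, Matrix.add_apply, ← Finset.sum_add_distrib] using
    HasDerivWithinAt.fun_sum fun k _ => (hM i k).fun_mul (hN k j)

theorem sub {M N : ℝ → Matrix m n 𝔸} {M' N' : Matrix m n 𝔸}
    (hM : HasEntrywiseDerivWithinAt M M' s x) (hN : HasEntrywiseDerivWithinAt N N' s x) :
    HasEntrywiseDerivWithinAt (fun t => M t - N t) (M' - N') s x := fun i j =>
  (hM i j).sub (hN i j)

theorem conjTranspose [StarAddMonoid 𝔸] [StarModule ℝ 𝔸] [ContinuousStar 𝔸]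
    {M : ℝ → Matrix m n 𝔸} {M' : Matrix m n 𝔸} (hM : HasEntrywiseDerivWithinAt M M' s x) :
    HasEntrywiseDerivWithinAt (fun t => (M t)ᴴ) M'ᴴ s x := fun i j =>
  (hM j i).star

end HasEntrywiseDerivWithinAt

theorem Convex.eq_of_hasEntrywiseDerivWithinAt_zero {s : Set ℝ} (hs : Convex ℝ s)
    {M : ℝ → Matrix m n 𝔸} (hM : ∀ t ∈ s, HasEntrywiseDerivWithinAt M 0 s t) {x y : ℝ}
    (hx : x ∈ s) (hy : y ∈ s) : M y = M x := by
  ext i j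
  have hle := norm_image_sub_le_of_norm_hasDerivWithin_le (fun t ht => hM t ht i j)
    (fun _ _ => norm_zero.le) hs hx hy
  simpa [sub_eq_zero] using hle

end EntrywiseDeriv

namespace Matrix

variable {m 𝔸 : Type*}

theorem IsSymm.sub_conjTranspose {H : Matrix m m ℂ} (h : H.IsSymm) :
    H - Hᴴ = (2 * Complex.I) • (H.map Complex.im).map Complex.ofReal := by
  ext i j
  rw [sub_apply, conjTranspose_apply, h.apply i j]
  simp only [smul_apply, map_apply, smul_eq_mul, Complex.star_def, Complex.sub_conj]
  push_cast
  ring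

theorem IsSymm.isHermitian_map_ofReal {M : Matrix m m ℝ} (h : M.IsSymm) :
    (M.map Complex.ofReal).IsHermitian :=
  (isHermitian_iff_isSymm.2 h).map _ fun x => (Complex.conj_ofReal x).symm

variable [Fintype m]

def wronskian [Ring 𝔸] [StarRing 𝔸] (Y Z : Matrix m m 𝔸) : Matrix m m 𝔸 := Yᴴ * Z - Zᴴ * Y

theorem wronskian_mul_right [Ring 𝔸] [StarRing 𝔸] (Y H : Matrix m m 𝔸) :
    wronskian Y (H * Y) = Yᴴ * (H - Hᴴ) * Y := by
  rw [wronskian, conjTranspose_mul, Matrix.mul_sub, Matrix.sub_mul, Matrix.mul_assoc,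
    Matrix.mul_assoc]

theorem wronskian_one_I_smul_one [DecidableEq m] :
    wronskian (1 : Matrix m m ℂ) (Complex.I • 1) = (2 * Complex.I) • 1 := by
  simp [wronskian, two_mul, add_smul]

theorem wronskian_eq_of_jacobi [NormedRing 𝔸] [NormedAlgebra ℝ 𝔸] [StarRing 𝔸]
    [StarModule ℝ 𝔸] [ContinuousStar 𝔸] {s : Set ℝ} (hs : Convex ℝ s)
    {A B : ℝ → Matrix m m 𝔸} (hA : ∀ t ∈ s, (A t).IsHermitian)
    (hB : ∀ t ∈ s, (B t).IsHermitian) {Y Z : ℝ → Matrix m m 𝔸}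
    (hY : ∀ t ∈ s, HasEntrywiseDerivWithinAt Y (A t * Z t) s t)
    (hZ : ∀ t ∈ s, HasEntrywiseDerivWithinAt Z (-(B t * Y t)) s t) {x y : ℝ} (hx : x ∈ s)
    (hy : y ∈ s) : wronskian (Y y) (Z y) = wronskian (Y x) (Z x) := by
  refine hs.eq_of_hasEntrywiseDerivWithinAt_zero (M := fun t => wronskian (Y t) (Z t))
    (fun t ht => ?_) hx hy
  have hW : HasEntrywiseDerivWithinAt (fun t => wronskian (Y t) (Z t))
      ((A t * Z t)ᴴ * Z t + (Y t)ᴴ * -(B t * Y t) - ((-(B t * Y t))ᴴ * Y t + (Z t)ᴴ * (A t * Z t)))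
      s t :=
    ((hY t ht).conjTranspose.mul (hZ t ht)).sub ((hZ t ht).conjTranspose.mul (hY t ht))
  convert hW using 1
  rw [conjTranspose_mul, conjTranspose_neg, conjTranspose_mul, (hA t ht).eq, (hB t ht).eq]
  noncomm_ring

theorem det_mul_norm_det_sq_eq_one [DecidableEq m] {M : Matrix m m ℝ} {Y : Matrix m m ℂ}
    (h : Yᴴ * M.map Complex.ofReal * Y = 1) : M.det * ‖Y.det‖ ^ 2 = 1 := by
  have hdet := congrArg det h
  have hmap : (M.map Complex.ofReal).det = (M.det : ℂ) :=
    (RingHom.map_det Complex.ofRealHom M).symm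
  rw [det_mul, det_mul, det_conjTranspose, det_one, hmap] at hdet
  apply Complex.ofReal_injective
  rw [Complex.ofReal_mul, ← Complex.normSq_eq_norm_sq, Complex.normSq_eq_conj_mul_self,
    Complex.ofReal_one, ← hdet, Complex.star_def]
  ring

theorem det_im_mul_norm_det_sq_eq_one_of_wronskian_eq [DecidableEq m] {Y Z : Matrix m m ℂ}
    (hY : Y.det ≠ 0) (hH : (Z * Y⁻¹).IsSymm) (hW : wronskian Y Z = (2 * Complex.I) • 1) :
    ((Z * Y⁻¹).map Complex.im).det * ‖Y.det‖ ^ 2 = 1 := by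
  apply det_mul_norm_det_sq_eq_one
  have hZ : Z = Z * Y⁻¹ * Y := (nonsing_inv_mul_cancel_right Y Z (isUnit_iff_ne_zero.2 hY)).symm
  rw [hZ, wronskian_mul_right, hH.sub_conjTranspose, Matrix.mul_smul, Matrix.smul_mul] at hW
  exact smul_right_injective _ (by simp [Complex.I_ne_zero]) hW

end Matrix

theorem det_im_H_abs_det_Y_sq_const_general
    {n : ℕ} (sm sp : ℝ)
    (A : Matrix (Fin n) (Fin n) ℝ) (hAsym : Aᵀ = A)
    (B : ℝ → Matrix (Fin n) (Fin n) ℝ)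
    (hBsym : ∀ s ∈ Icc sm sp, (B s)ᵀ = B s)
    (Y Z : ℝ → Matrix (Fin n) (Fin n) ℂ)
    (hY : ∀ s ∈ Icc sm sp, ∀ i j, HasDerivWithinAt (fun t => Y t i j)
      ((A.map (Complex.ofReal) * Z s) i j) (Icc sm sp) s)
    (hZ : ∀ s ∈ Icc sm sp, ∀ i j, HasDerivWithinAt (fun t => Z t i j)
      ((-((B s).map (Complex.ofReal) * Y s)) i j) (Icc sm sp) s)
    (hY0 : Y sm = 1) (hZ0 : Z sm = Complex.I • (1 : Matrix (Fin n) (Fin n) ℂ))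
    (hYinv : ∀ s ∈ Icc sm sp, (Y s).det ≠ 0)
    (hHsym : ∀ s ∈ Icc sm sp, (Z s * (Y s)⁻¹)ᵀ = Z s * (Y s)⁻¹) :
    ∀ s ∈ Icc sm sp,
      ((Z s * (Y s)⁻¹).map Complex.im).det * ‖(Y s).det‖ ^ 2
        = ((Z sm * (Y sm)⁻¹).map Complex.im).det
            * ‖(Y sm).det‖ ^ 2 := by
  have h_eq_one : ∀ s ∈ Icc sm sp,
      ((Z s * (Y s)⁻¹).map Complex.im).det * ‖(Y s).det‖ ^ 2 = 1 := by
    intro s hs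
    refine det_im_mul_norm_det_sq_eq_one_of_wronskian_eq (hYinv s hs) (hHsym s hs) ?_
    rw [wronskian_eq_of_jacobi (convex_Icc sm sp) (A := fun _ => A.map Complex.ofReal)
      (fun _ _ => IsSymm.isHermitian_map_ofReal hAsym)
      (fun t ht => IsSymm.isHermitian_map_ofReal (hBsym t ht)) hY hZ
      ⟨le_rfl, hs.1.trans hs.2⟩ hs, hY0, hZ0, wronskian_one_I_smul_one]
  intro s hs
  rw [h_eq_one s hs, h_eq_one sm ⟨le_rfl, hs.1.trans hs.2⟩]

/-- Conservation law: `det(Im H(s)) · |det Y(s)|²` is constant along the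
complexified Jacobi system, where `H = Z Y⁻¹`. -/
theorem det_im_H_abs_det_Y_sq_const
    {n : ℕ} (sm sp : ℝ) (hs : sm ≤ sp)
    (A : Matrix (Fin n) (Fin n) ℝ) (hAsym : Aᵀ = A)
    (B : ℝ → Matrix (Fin n) (Fin n) ℝ)
    (hBsym : ∀ s ∈ Icc sm sp, (B s)ᵀ = B s)
    (Y Z : ℝ → Matrix (Fin n) (Fin n) ℂ)
    (hY : ∀ s ∈ Icc sm sp, ∀ i j, HasDerivWithinAt (fun t => Y t i j)
      ((A.map (Complex.ofReal) * Z s) i j) (Icc sm sp) s)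
    (hZ : ∀ s ∈ Icc sm sp, ∀ i j, HasDerivWithinAt (fun t => Z t i j)
      ((-((B s).map (Complex.ofReal) * Y s)) i j) (Icc sm sp) s)
    (hY0 : Y sm = 1) (hZ0 : Z sm = Complex.I • (1 : Matrix (Fin n) (Fin n) ℂ))
    (hYinv : ∀ s ∈ Icc sm sp, (Y s).det ≠ 0)
    (hHsym : ∀ s ∈ Icc sm sp, (Z s * (Y s)⁻¹)ᵀ = Z s * (Y s)⁻¹)
    (hHim : ∀ s ∈ Icc sm sp, ((Z s * (Y s)⁻¹).map Complex.im).PosDef) :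
    ∀ s ∈ Icc sm sp,
      ((Z s * (Y s)⁻¹).map Complex.im).det * ‖(Y s).det‖ ^ 2
        = ((Z sm * (Y sm)⁻¹).map Complex.im).det
            * ‖(Y sm).det‖ ^ 2 :=
  det_im_H_abs_det_Y_sq_const_general sm sp A hAsym B hBsym Y Z hY hZ hY0 hZ0 hYinv hHsym
end

section
/- Let $\tau \ge 1$, $C > 0$, and let $\phi : V_\rho \to \mathbb{C}$ satisfy $\operatorname{Im}\phi(s,z') \ge C\|z'\|^2$ on $V_\rho = (s_--\rho, s_++\rho) \times \{z' \in \mathbb{R}^3 : \|z'\| < \rho\}$, with $0 < \rho \le 1$ and $s_+ - s_- \le T$. Suppose $F : V_\rho \to \mathbb{C}$ satisfies the pointwise bound $|F(s,z')| \le |e^{i\tau\phi(s,z')}|\,(\tau^2\|z'\|^{N_0+1} + \tau\|z'\|^{N_1+1} + \tau^{-N_2})$ with integers $N_0 \le N_1+2$ and $N_1 \le 2N_2+1$. Then $\|F\|_{L^2(V_\rho)}^2 \le M\,\tau^{-N_0 + 3/2}$ for a constant $M$ depending only on $C$, $T$, $N_0$, $N_1$, $N_2$. -/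
open Set Real MeasureTheory

/-!
Since `‖exp (iτφ)‖ ≤ exp (-τC‖z'‖²)`, squaring the pointwise bound leaves two Gaussian factors.
One absorbs the polynomial weights through `r^{2m} e^{-τCr²} ≤ m!/(τC)^m`, so the three terms of
the amplitude contribute at most `τ^{3-N₀}`, `τ^{1-N₁}` and `τ^{-2N₂}`, each `≤ τ^{3-N₀}` under
the constraints on `N`. The other is integrated over all of `ℝ³`; it gives `(π/(τC))^{3/2}`, the
remaining factor `τ^{-3/2}`.
-/

lemma pow_sq_mul_exp_neg_mul_sq_le {a : ℝ} (ha : 0 < a) (r : ℝ) (m : ℕ) :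
    (r ^ m) ^ 2 * exp (-a * r ^ 2) ≤ m.factorial / a ^ m := by
  have hexp := pow_div_factorial_le_exp (x := a * r ^ 2) (by positivity) m
  rw [div_le_iff₀ (by positivity)] at hexp
  rw [le_div_iff₀ (by positivity)]
  calc (r ^ m) ^ 2 * exp (-a * r ^ 2) * a ^ m = (a * r ^ 2) ^ m * exp (-a * r ^ 2) := by
        ring
    _ ≤ exp (a * r ^ 2) * m.factorial * exp (-a * r ^ 2) := by gcongr
    _ = m.factorial := by rw [mul_comm, ← mul_assoc, ← exp_add]; simp

lemma sq_pow_mul_pow_mul_exp_le {τ C : ℝ} (hτ : 1 ≤ τ) (hC : 0 < C) (r : ℝ) (j m : ℕ)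
    {e : ℝ} (he : 2 * (j : ℝ) - m ≤ e) :
    (τ ^ j * r ^ m) ^ 2 * exp (-(τ * C) * r ^ 2) ≤ m.factorial / C ^ m * τ ^ e := by
  have hτ0 : 0 < τ := by linarith
  calc (τ ^ j * r ^ m) ^ 2 * exp (-(τ * C) * r ^ 2)
      = τ ^ (2 * j) * ((r ^ m) ^ 2 * exp (-(τ * C) * r ^ 2)) := by ring
    _ ≤ τ ^ (2 * j) * (m.factorial / (τ * C) ^ m) := by
      gcongr; exact pow_sq_mul_exp_neg_mul_sq_le (by positivity) r m
    _ = m.factorial / C ^ m * τ ^ (2 * (j : ℝ) - m) := by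
      rw [rpow_sub hτ0, show 2 * (j : ℝ) = (2 * j : ℕ) by push_cast; ring, rpow_natCast,
        rpow_natCast, mul_pow]
      field_simp
    _ ≤ m.factorial / C ^ m * τ ^ e := by gcongr

lemma norm_cexp_I_mul_ofReal_mul (τ : ℝ) (w : ℂ) :
    ‖Complex.exp (Complex.I * τ * w)‖ = exp (-(τ * w.im)) := by
  simp [Complex.norm_exp, Complex.mul_re]

lemma amplitude_sq_mul_exp_le {τ C : ℝ} (hτ : 1 ≤ τ) (hC : 0 < C) (r : ℝ) {N₀ N₁ N₂ : ℕ}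
    (hN₀ : N₀ ≤ N₁ + 2) (hN₁ : N₁ ≤ 2 * N₂ + 1) :
    (τ ^ 2 * r ^ (N₀ + 1) + τ * r ^ (N₁ + 1) + τ ^ (-(N₂ : ℝ))) ^ 2 * exp (-(τ * C) * r ^ 2)
      ≤ 3 * ((N₀ + 1).factorial / C ^ (N₀ + 1) + (N₁ + 1).factorial / C ^ (N₁ + 1) + 1)
        * τ ^ (3 - N₀ : ℝ) := by
  have hτ0 : 0 < τ := by linarith
  have hN₀' : (N₀ : ℝ) ≤ N₁ + 2 := by exact_mod_cast hN₀
  have hN₁' : (N₁ : ℝ) ≤ 2 * N₂ + 1 := by exact_mod_cast hN₁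
  set g := exp (-(τ * C) * r ^ 2)
  have hg : g ≤ 1 := exp_le_one_iff.mpr (by nlinarith [mul_pos hτ0 hC, sq_nonneg r])
  have h₀ := sq_pow_mul_pow_mul_exp_le hτ hC r 2 (N₀ + 1) (e := 3 - N₀)
    (by push_cast; linarith)
  have h₁ := sq_pow_mul_pow_mul_exp_le hτ hC r 1 (N₁ + 1) (e := 3 - N₀)
    (by push_cast; linarith)
  have h₂ : (τ ^ (-(N₂ : ℝ))) ^ 2 * g ≤ τ ^ (3 - N₀ : ℝ) := calc
    (τ ^ (-(N₂ : ℝ))) ^ 2 * g ≤ τ ^ (-(N₂ : ℝ) * 2) := by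
      rw [rpow_mul hτ0.le, rpow_two]; exact mul_le_of_le_one_right (by positivity) hg
    _ ≤ τ ^ (3 - N₀ : ℝ) := by gcongr; linarith
  rw [pow_one] at h₁
  set x := τ ^ 2 * r ^ (N₀ + 1)
  set y := τ * r ^ (N₁ + 1)
  set z := τ ^ (-(N₂ : ℝ))
  have hsq : (x + y + z) ^ 2 ≤ 3 * (x ^ 2 + y ^ 2 + z ^ 2) := by
    nlinarith [sq_nonneg (x - y), sq_nonneg (y - z), sq_nonneg (x - z)]
  calc (x + y + z) ^ 2 * g ≤ 3 * (x ^ 2 * g + y ^ 2 * g + z ^ 2 * g) := by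
        nlinarith [exp_pos (-(τ * C) * r ^ 2)]
    _ ≤ _ := by linarith

lemma sq_le_of_le_norm_cexp_mul_amplitude {τ C : ℝ} (hτ : 1 ≤ τ) (hC : 0 < C)
    {N₀ N₁ N₂ : ℕ} (hN₀ : N₀ ≤ N₁ + 2) (hN₁ : N₁ ≤ 2 * N₂ + 1) {w : ℂ} {r y : ℝ} (hr : 0 ≤ r)
    (hy₀ : 0 ≤ y) (hw : C * r ^ 2 ≤ w.im)
    (hy : y ≤ ‖Complex.exp (Complex.I * τ * w)‖
      * (τ ^ 2 * r ^ (N₀ + 1) + τ * r ^ (N₁ + 1) + τ ^ (-(N₂ : ℝ)))) :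
    y ^ 2 ≤ 3 * ((N₀ + 1).factorial / C ^ (N₀ + 1) + (N₁ + 1).factorial / C ^ (N₁ + 1) + 1)
      * τ ^ (3 - N₀ : ℝ) * exp (-(τ * C) * r ^ 2) := by
  have hτ0 : 0 < τ := by linarith
  have hdecay : ‖Complex.exp (Complex.I * τ * w)‖ ≤ exp (-(τ * C) * r ^ 2) := by
    rw [norm_cexp_I_mul_ofReal_mul]
    gcongr
    nlinarith
  calc y ^ 2
      ≤ (exp (-(τ * C) * r ^ 2)
          * (τ ^ 2 * r ^ (N₀ + 1) + τ * r ^ (N₁ + 1) + τ ^ (-(N₂ : ℝ)))) ^ 2 := by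
        gcongr; exact hy.trans (by gcongr)
    _ = (τ ^ 2 * r ^ (N₀ + 1) + τ * r ^ (N₁ + 1) + τ ^ (-(N₂ : ℝ))) ^ 2
          * exp (-(τ * C) * r ^ 2) * exp (-(τ * C) * r ^ 2) := by ring
    _ ≤ _ :=
      mul_le_mul_of_nonneg_right (amplitude_sq_mul_exp_le hτ hC r hN₀ hN₁) (exp_pos _).le

variable {V : Type*} [NormedAddCommGroup V] [InnerProductSpace ℝ V] [FiniteDimensional ℝ V]
  [MeasurableSpace V] [BorelSpace V]

lemma integrable_exp_neg_mul_sq_norm {a : ℝ} (ha : 0 < a) :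
    Integrable fun v : V ↦ exp (-a * ‖v‖ ^ 2) :=
  .of_integral_ne_zero <| by
    rw [GaussianFourier.integral_rexp_neg_mul_sq_norm ha]; positivity

lemma setIntegral_prod_le_of_le_gaussian {f : ℝ × V → ℝ} {s : Set ℝ} {t : Set V}
    (hs : MeasurableSet s) (hs' : volume s ≠ ⊤) (ht : MeasurableSet t) {K a : ℝ} (hK : 0 ≤ K)
    (ha : 0 < a) (hf₀ : ∀ p ∈ s ×ˢ t, 0 ≤ f p)
    (hf : ∀ p ∈ s ×ˢ t, f p ≤ K * exp (-a * ‖p.2‖ ^ 2)) :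
    ∫ p in s ×ˢ t, f p ≤ volume.real s * K * (π / a) ^ (Module.finrank ℝ V / 2 : ℝ) := by
  have hg : IntegrableOn (fun p : ℝ × V ↦ K * exp (-a * ‖p.2‖ ^ 2)) (s ×ˢ univ) := by
    rw [IntegrableOn, Measure.volume_eq_prod, ← Measure.prod_restrict, Measure.restrict_univ]
    exact (integrableOn_const (C := K) hs').mul_prod (integrable_exp_neg_mul_sq_norm ha)
  calc ∫ p in s ×ˢ t, f p ≤ ∫ p in s ×ˢ t, K * exp (-a * ‖p.2‖ ^ 2) :=
        integral_mono_of_nonneg (ae_restrict_of_forall_mem (hs.prod ht) hf₀)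
          (hg.mono_set (prod_mono_right (subset_univ t)))
          (ae_restrict_of_forall_mem (hs.prod ht) hf)
    _ ≤ ∫ p in s ×ˢ univ, K * exp (-a * ‖p.2‖ ^ 2) :=
        setIntegral_mono_set hg (.of_forall fun _ ↦ by positivity)
          (prod_mono_right (subset_univ t)).eventuallyLE
    _ = volume.real s * K * (π / a) ^ (Module.finrank ℝ V / 2 : ℝ) := by
        rw [Measure.volume_eq_prod,
          setIntegral_prod_mul (fun _ ↦ K) (fun v : V ↦ exp (-a * ‖v‖ ^ 2)), setIntegral_const,
          Measure.restrict_univ, GaussianFourier.integral_rexp_neg_mul_sq_norm ha, smul_eq_mul]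

theorem gaussian_beam_residual_L2_bound_general
    (C T : ℝ) (hC : 0 < C) (N₀ N₁ N₂ : ℕ)
    (hN₀ : N₀ ≤ N₁ + 2) (hN₁ : N₁ ≤ 2 * N₂ + 1) :
    ∃ M : ℝ, ∀ (sm sp ρ τ : ℝ)
      (φ F : ℝ × EuclideanSpace ℝ (Fin 3) → ℂ),
      1 ≤ τ → 0 < ρ → ρ ≤ 1 → sm ≤ sp → sp - sm ≤ T →
      Measurable F →
      (∀ p ∈ (Set.Ioo (sm - ρ) (sp + ρ)) ×ˢ
          Metric.ball (0 : EuclideanSpace ℝ (Fin 3)) ρ,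
        C * ‖p.2‖ ^ 2 ≤ (φ p).im) →
      (∀ p ∈ (Set.Ioo (sm - ρ) (sp + ρ)) ×ˢ
          Metric.ball (0 : EuclideanSpace ℝ (Fin 3)) ρ,
        ‖F p‖ ≤ ‖Complex.exp (Complex.I * τ * φ p)‖
          * (τ ^ 2 * ‖p.2‖ ^ (N₀ + 1) + τ * ‖p.2‖ ^ (N₁ + 1) + τ ^ (-(N₂ : ℝ)))) →
      (∫ p in (Set.Ioo (sm - ρ) (sp + ρ)) ×ˢ
          Metric.ball (0 : EuclideanSpace ℝ (Fin 3)) ρ, ‖F p‖ ^ 2)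
        ≤ M * τ ^ (-(N₀ : ℝ) + 3 / 2) := by
  set c := 3 * ((N₀ + 1).factorial / C ^ (N₀ + 1) + (N₁ + 1).factorial / C ^ (N₁ + 1) + 1)
  refine ⟨(T + 2) * c * (π / C) ^ (3 / 2 : ℝ), ?_⟩
  intro sm sp ρ τ φ F hτ hρ hρ₁ hsp hT _ hφ hF
  have hτ0 : 0 < τ := by linarith
  calc _ ≤ volume.real (Ioo (sm - ρ) (sp + ρ)) * (c * τ ^ (3 - N₀ : ℝ))
        * (π / (τ * C)) ^ (Module.finrank ℝ (EuclideanSpace ℝ (Fin 3)) / 2 : ℝ) :=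
        setIntegral_prod_le_of_le_gaussian measurableSet_Ioo measure_Ioo_lt_top.ne
          measurableSet_ball (by positivity) (by positivity) (fun _ _ ↦ by positivity)
          fun p hp ↦ sq_le_of_le_norm_cexp_mul_amplitude hτ hC hN₀ hN₁ (norm_nonneg _)
            (norm_nonneg _) (hφ p hp) (hF p hp)
    _ = (sp - sm + 2 * ρ) * c * (π / C) ^ (3 / 2 : ℝ) * τ ^ (-(N₀ : ℝ) + 3 / 2) := by
        have hscale : (π / (τ * C)) ^ (3 / 2 : ℝ) = (π / C) ^ (3 / 2 : ℝ) * τ ^ (-(3 / 2) : ℝ) := by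
          rw [mul_comm τ, ← div_div, div_rpow (by positivity) hτ0.le, rpow_neg hτ0.le,
            div_eq_mul_inv]
        have hexp : τ ^ (3 - N₀ : ℝ) * τ ^ (-(3 / 2) : ℝ) = τ ^ (-(N₀ : ℝ) + 3 / 2) := by
          rw [← rpow_add hτ0]; ring_nf
        rw [volume_real_Ioo_of_le (by linarith), finrank_euclideanSpace_fin, Nat.cast_ofNat, hscale,
          ← hexp]
        ring
    _ ≤ (T + 2) * c * (π / C) ^ (3 / 2 : ℝ) * τ ^ (-(N₀ : ℝ) + 3 / 2) := by
        gcongr; linarith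

/-- Quantitative `L²` bound for the Gaussian beam residual: if
`|F| ≤ |e^{iτφ}| (τ²‖z'‖^{N₀+1} + τ‖z'‖^{N₁+1} + τ^{-N₂})` on the tube `V_ρ`
with `Im φ ≥ C‖z'‖²`, `N₀ ≤ N₁+2`, `N₁ ≤ 2N₂+1`, then
`‖F‖²_{L²(V_ρ)} ≤ M τ^{-N₀+3/2}`. -/
theorem gaussian_beam_residual_L2_bound
    (C T : ℝ) (hC : 0 < C) (hT : 0 < T) (N₀ N₁ N₂ : ℕ)
    (hN₀ : N₀ ≤ N₁ + 2) (hN₁ : N₁ ≤ 2 * N₂ + 1) :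
    ∃ M : ℝ, ∀ (sm sp ρ τ : ℝ)
      (φ F : ℝ × EuclideanSpace ℝ (Fin 3) → ℂ),
      1 ≤ τ → 0 < ρ → ρ ≤ 1 → sm ≤ sp → sp - sm ≤ T →
      Measurable F →
      (∀ p ∈ (Set.Ioo (sm - ρ) (sp + ρ)) ×ˢ
          Metric.ball (0 : EuclideanSpace ℝ (Fin 3)) ρ,
        C * ‖p.2‖ ^ 2 ≤ (φ p).im) →
      (∀ p ∈ (Set.Ioo (sm - ρ) (sp + ρ)) ×ˢ
          Metric.ball (0 : EuclideanSpace ℝ (Fin 3)) ρ,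
        ‖F p‖ ≤ ‖Complex.exp (Complex.I * τ * φ p)‖
          * (τ ^ 2 * ‖p.2‖ ^ (N₀ + 1) + τ * ‖p.2‖ ^ (N₁ + 1) + τ ^ (-(N₂ : ℝ)))) →
      (∫ p in (Set.Ioo (sm - ρ) (sp + ρ)) ×ˢ
          Metric.ball (0 : EuclideanSpace ℝ (Fin 3)) ρ, ‖F p‖ ^ 2)
        ≤ M * τ ^ (-(N₀ : ℝ) + 3 / 2) :=
  gaussian_beam_residual_L2_bound_general C T hC N₀ N₁ N₂ hN₀ hN₁
end
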